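/- Assume the V structure with P(X=x, C=c) > 0 for all x, c ∈ {0,1}, and define RD(c) := P(Y=1 | X=1, C=c) − P(Y=1 | X=0, C=c) and w_c := var(X | C=c)·P(C=c) / [ var(X | C=1)·P(C=1) + var(X | C=0)·P(C=0) ] for c ∈ {0,1}. (i) If X has strictly positive effects on C at both levels of Y and Y has strictly positive effects on C at both levels of X (i.e., p_{C=1|11} > p_{C=1|10}, p_{C=1|01} > p_{C=1|00}, p_{C=1|11} > p_{C=1|01}, p_{C=1|10} > p_{C=1|00}), or if all four of these effects are strictly negative, then w_1·RD(1) + w_0·RD(0) < 0. (ii) If X has strictly positive effects on C at both levels of Y and Y has strictly negative effects on C at both levels of X, or vice versa, then w_1·RD(1) + w_0·RD(0) > 0. -/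

import Mathlib

open MeasureTheory ProbabilityTheory

variable {Ω : Type*} [MeasurableSpace Ω]

/-- The event that the random variable `X` takes the value `x`. -/
def ev (X : Ω → ℝ) (x : ℝ) : Set Ω := {ω | X ω = x}

/-- The probability of an event, as a real number. -/
noncomputable def pr (P : Measure Ω) (s : Set Ω) : ℝ := (P s).toReal

/-- The conditional probability `P(s | t)`, as a real number. -/
noncomputable def cpr (P : Measure Ω) (s t : Set Ω) : ℝ := pr (P[|t]) s

/-- The covariance of two real-valued random variables. -/
noncomputable def rcov (P : Measure Ω) (X Y : Ω → ℝ) : ℝ :=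
  ∫ ω, (X ω - ∫ ω', X ω' ∂P) * (Y ω - ∫ ω', Y ω' ∂P) ∂P

/-- The conditional covariance of two real-valued random variables given an event. -/
noncomputable def covCond (P : Measure Ω) (X Y : Ω → ℝ) (t : Set Ω) : ℝ :=
  rcov (P[|t]) X Y

/-- The conditional variance of a real-valued random variable given an event. -/
noncomputable def varCond (P : Measure Ω) (X : Ω → ℝ) (t : Set Ω) : ℝ :=
  covCond P X X t

/-- A measurable `{0,1}`-valued random variable. -/
def IsBin (X : Ω → ℝ) : Prop := Measurable X ∧ ∀ ω, X ω = 0 ∨ X ω = 1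

/-- The stratum-specific risk difference of `Y` comparing `X = 1` with `X = 0` within the
stratum `Z = z`. -/
noncomputable def strataRD (P : Measure Ω) (X Y Z : Ω → ℝ) (z : ℝ) : ℝ :=
  cpr P (ev Y 1) (ev X 1 ∩ ev Z z) - cpr P (ev Y 1) (ev X 0 ∩ ev Z z)

/-- The linear-regression weight of the stratum `Z = z`, proportional to
`var(X | Z = z) * P(Z = z)`. -/
noncomputable def strataW (P : Measure Ω) (X Z : Ω → ℝ) (z : ℝ) : ℝ :=
  varCond P X (ev Z z) * pr P (ev Z z) /
    (varCond P X (ev Z 1) * pr P (ev Z 1) + varCond P X (ev Z 0) * pr P (ev Z 0))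

/-!
Within the stratum `C = c` the regression slope `var(X | c) · RD(c)` equals `cov(X, Y | c)`, so the
weighted average of the risk differences is `E[cov(X, Y | C)] / E[var(X | C)]`. By the law of total
covariance and the independence of `X` and `Y`, the numerator is
`-cov(E[X | C], E[Y | C]) = -cov(X, C) · cov(Y, C) / (P(C = 1) · P(C = 0))`.
Finally `cov(X, C) = var(X) · (P(C = 1 | X = 1) - P(C = 1 | X = 0))`, and because `Y` is independent
of `X` this risk difference is the `P(Y = y)`-weighted average of the effects of `X` on `C` at the
two levels of `Y`; symmetrically for `cov(Y, C)`. So the bias has the sign opposite to the product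
of the two effects.
-/

namespace IsBin

variable {X Y : Ω → ℝ}

lemma measurableSet_ev (hX : IsBin X) (x : ℝ) : MeasurableSet (ev X x) :=
  hX.1 (measurableSet_singleton x)

lemma eq_indicator (hX : IsBin X) : X = (ev X 1).indicator 1 := by
  funext ω
  rcases hX.2 ω with h | h <;> simp [ev, h]

lemma inter_ev_zero (hX : IsBin X) (s : Set Ω) : s ∩ ev X 0 = s \ ev X 1 := by
  ext ω
  rcases hX.2 ω with h | h <;> simp [ev, h]

lemma memLp (hX : IsBin X) (P : Measure Ω) [IsFiniteMeasure P] : MemLp X 2 P := by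
  rw [hX.eq_indicator]
  exact memLp_indicator_const 2 (hX.measurableSet_ev 1) 1 (Or.inr (measure_ne_top _ _))

lemma integral_eq (hX : IsBin X) (P : Measure Ω) : ∫ ω, X ω ∂P = pr P (ev X 1) := by
  conv_lhs => rw [hX.eq_indicator]
  exact integral_indicator_one (hX.measurableSet_ev 1)

end IsBin

section

variable {P : Measure Ω} {X Y Z : Ω → ℝ}

lemma pr_inter_ev_one_add_pr_inter_ev_zero [IsFiniteMeasure P] (hZ : IsBin Z) (s : Set Ω) :
    pr P (s ∩ ev Z 1) + pr P (s ∩ ev Z 0) = pr P s := by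
  rw [hZ.inter_ev_zero]
  exact measureReal_inter_add_sdiff (hZ.measurableSet_ev 1)

lemma pr_ev_zero [IsProbabilityMeasure P] (hX : IsBin X) :
    pr P (ev X 0) = 1 - pr P (ev X 1) := by
  have := pr_inter_ev_one_add_pr_inter_ev_zero (P := P) hX Set.univ
  simp only [Set.univ_inter] at this
  have h1 : pr P Set.univ = 1 := by simp [pr]
  linarith

lemma cpr_eq_div {t : Set Ω} (ht : MeasurableSet t) (s : Set Ω) :
    cpr P s t = pr P (s ∩ t) / pr P t := by
  rw [cpr, pr, cond_apply ht, ENNReal.toReal_mul, ENNReal.toReal_inv, Set.inter_comm, pr, pr,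
    inv_mul_eq_div]

lemma cpr_mul_pr [IsFiniteMeasure P] {t : Set Ω} (ht : MeasurableSet t) (s : Set Ω) :
    cpr P s t * pr P t = pr P (s ∩ t) := by
  rw [cpr, pr, pr, pr, ← ENNReal.toReal_mul, cond_mul_eq_inter ht, Set.inter_comm]

lemma pr_ev_inter_ev_of_indepFun (hXY : IndepFun X Y P) (x y : ℝ) :
    pr P (ev X x ∩ ev Y y) = pr P (ev X x) * pr P (ev Y y) := by
  rw [pr, pr, pr, ← ENNReal.toReal_mul]
  exact congrArg ENNReal.toReal (hXY.measure_inter_preimage_eq_mul {x} {y}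
    (measurableSet_singleton x) (measurableSet_singleton y))

lemma rcov_eq_covariance (X Y : Ω → ℝ) : rcov P X Y = covariance X Y P := rfl

lemma rcov_of_isBin [IsProbabilityMeasure P] (hX : IsBin X) (hY : IsBin Y) :
    rcov P X Y = pr P (ev X 1 ∩ ev Y 1) - pr P (ev X 1) * pr P (ev Y 1) := by
  have hXY : X * Y = (ev X 1 ∩ ev Y 1).indicator 1 := by
    rw [Set.inter_indicator_one, ← hX.eq_indicator, ← hY.eq_indicator]
  rw [rcov_eq_covariance, covariance_eq_sub (hX.memLp P) (hY.memLp P), hXY,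
    integral_indicator_one ((hX.measurableSet_ev 1).inter (hY.measurableSet_ev 1)),
    hX.integral_eq, hY.integral_eq]
  rfl

lemma rcov_self_of_isBin [IsProbabilityMeasure P] (hX : IsBin X) :
    rcov P X X = pr P (ev X 1) * pr P (ev X 0) := by
  rw [rcov_of_isBin hX hX, Set.inter_self, pr_ev_zero hX]
  ring

noncomputable def riskDiff (P : Measure Ω) (X Y : Ω → ℝ) : ℝ :=
  cpr P (ev Y 1) (ev X 1) - cpr P (ev Y 1) (ev X 0)

lemma rcov_self_mul_riskDiff [IsProbabilityMeasure P] (hX : IsBin X) (hY : IsBin Y) :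
    rcov P X X * riskDiff P X Y = rcov P X Y := by
  have hY1 := pr_inter_ev_one_add_pr_inter_ev_zero (P := P) hX (ev Y 1)
  calc rcov P X X * riskDiff P X Y
      = pr P (ev X 0) * (cpr P (ev Y 1) (ev X 1) * pr P (ev X 1))
        - pr P (ev X 1) * (cpr P (ev Y 1) (ev X 0) * pr P (ev X 0)) := by
        rw [rcov_self_of_isBin hX, riskDiff]; ring
    _ = rcov P X Y := by
        rw [cpr_mul_pr (hX.measurableSet_ev 1), cpr_mul_pr (hX.measurableSet_ev 0),
          rcov_of_isBin hX hY, Set.inter_comm (ev X 1), pr_ev_zero hX, ← hY1]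
        ring

lemma varCond_mul_strataRD [IsFiniteMeasure P] (hX : IsBin X) (hY : IsBin Y) (hZ : IsBin Z)
    (z : ℝ) : varCond P X (ev Z z) * strataRD P X Y Z z = covCond P X Y (ev Z z) := by
  by_cases h : P (ev Z z) = 0
  · simp [varCond, covCond, rcov, cond_eq_zero_of_meas_eq_zero h]
  have := cond_isProbabilityMeasure h
  have hRD : strataRD P X Y Z z = riskDiff (P[|ev Z z]) X Y := by
    simp only [strataRD, riskDiff, cpr,
      cond_cond_eq_cond_inter (hZ.measurableSet_ev z) (hX.measurableSet_ev _), Set.inter_comm]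
  rw [hRD]
  exact rcov_self_mul_riskDiff hX hY

lemma strataW_mul_strataRD_add [IsFiniteMeasure P] (hX : IsBin X) (hY : IsBin Y) (hZ : IsBin Z) :
    strataW P X Z 1 * strataRD P X Y Z 1 + strataW P X Z 0 * strataRD P X Y Z 0 =
      (covCond P X Y (ev Z 1) * pr P (ev Z 1) + covCond P X Y (ev Z 0) * pr P (ev Z 0)) /
        (varCond P X (ev Z 1) * pr P (ev Z 1) + varCond P X (ev Z 0) * pr P (ev Z 0)) := by
  rw [← varCond_mul_strataRD hX hY hZ, ← varCond_mul_strataRD hX hY hZ, strataW, strataW]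
  ring

lemma covCond_of_isBin [IsFiniteMeasure P] (hX : IsBin X) (hY : IsBin Y) (t : Set Ω) :
    covCond P X Y t = cpr P (ev X 1 ∩ ev Y 1) t - cpr P (ev X 1) t * cpr P (ev Y 1) t := by
  by_cases h : P t = 0
  · simp [covCond, rcov, cpr, pr, cond_eq_zero_of_meas_eq_zero h]
  have := cond_isProbabilityMeasure h
  exact rcov_of_isBin hX hY

lemma covCond_mul_pr_add_covCond_mul_pr [IsProbabilityMeasure P] (hX : IsBin X) (hY : IsBin Y)
    (hZ : IsBin Z) (h1 : pr P (ev Z 1) ≠ 0) (h0 : pr P (ev Z 0) ≠ 0) :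
    covCond P X Y (ev Z 1) * pr P (ev Z 1) + covCond P X Y (ev Z 0) * pr P (ev Z 0) =
      rcov P X Y - rcov P X Z * rcov P Y Z / (pr P (ev Z 1) * pr P (ev Z 0)) := by
  have hXY := pr_inter_ev_one_add_pr_inter_ev_zero (P := P) hZ (ev X 1 ∩ ev Y 1)
  have hX1 := pr_inter_ev_one_add_pr_inter_ev_zero (P := P) hZ (ev X 1)
  have hY1 := pr_inter_ev_one_add_pr_inter_ev_zero (P := P) hZ (ev Y 1)
  simp only [covCond_of_isBin hX hY, cpr_eq_div (hZ.measurableSet_ev _), rcov_of_isBin hX hY,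
    rcov_of_isBin hX hZ, rcov_of_isBin hY hZ, ← hXY, ← hX1, ← hY1]
  rw [pr_ev_zero hZ] at h0 ⊢
  field_simp
  ring

lemma varCond_of_isBin [IsFiniteMeasure P] (hX : IsBin X) (t : Set Ω) :
    varCond P X t = cpr P (ev X 1) t * cpr P (ev X 0) t := by
  by_cases h : P t = 0
  · simp [varCond, covCond, rcov, cpr, pr, cond_eq_zero_of_meas_eq_zero h]
  have := cond_isProbabilityMeasure h
  exact rcov_self_of_isBin hX

lemma varCond_mul_pr_pos [IsFiniteMeasure P] (hX : IsBin X) {t : Set Ω} (ht : MeasurableSet t)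
    (h1 : 0 < pr P (ev X 1 ∩ t)) (h0 : 0 < pr P (ev X 0 ∩ t)) : 0 < varCond P X t * pr P t := by
  have : 0 < pr P t := h1.trans_le (measureReal_mono Set.inter_subset_right)
  rw [varCond_of_isBin hX, cpr_eq_div ht, cpr_eq_div ht]
  positivity

lemma strataW_mul_strataRD_add_of_indepFun [IsProbabilityMeasure P] (hX : IsBin X) (hY : IsBin Y)
    (hZ : IsBin Z) (hXY : IndepFun X Y P) (h1 : pr P (ev Z 1) ≠ 0) (h0 : pr P (ev Z 0) ≠ 0) :
    strataW P X Z 1 * strataRD P X Y Z 1 + strataW P X Z 0 * strataRD P X Y Z 0 =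
      -(rcov P X Z * rcov P Y Z) / (pr P (ev Z 1) * pr P (ev Z 0) *
        (varCond P X (ev Z 1) * pr P (ev Z 1) + varCond P X (ev Z 0) * pr P (ev Z 0))) := by
  have hcov : rcov P X Y = 0 := by
    rw [rcov_of_isBin hX hY, pr_ev_inter_ev_of_indepFun hXY, sub_self]
  rw [strataW_mul_strataRD_add hX hY hZ, covCond_mul_pr_add_covCond_mul_pr hX hY hZ h1 h0, hcov,
    zero_sub, neg_div, div_div, neg_div]

lemma cpr_ev_eq_of_indepFun [IsFiniteMeasure P] (hX : IsBin X) (hY : IsBin Y)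
    (hXY : IndepFun X Y P) (s : Set Ω) {x : ℝ} (hx : pr P (ev X x) ≠ 0) :
    cpr P s (ev X x) = pr P (ev Y 1) * cpr P s (ev X x ∩ ev Y 1) +
      pr P (ev Y 0) * cpr P s (ev X x ∩ ev Y 0) := by
  have hcell : ∀ y, pr P (s ∩ ev X x ∩ ev Y y) =
      pr P (ev Y y) * cpr P s (ev X x ∩ ev Y y) * pr P (ev X x) := fun y => by
    rw [Set.inter_assoc, ← cpr_mul_pr ((hX.measurableSet_ev x).inter (hY.measurableSet_ev y)),
      pr_ev_inter_ev_of_indepFun hXY]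
    ring
  rw [cpr_eq_div (hX.measurableSet_ev x), ← pr_inter_ev_one_add_pr_inter_ev_zero hY, hcell, hcell,
    ← add_mul, mul_div_cancel_right₀ _ hx]

lemma riskDiff_eq_of_indepFun [IsFiniteMeasure P] (hX : IsBin X) (hY : IsBin Y)
    (hXY : IndepFun X Y P) (h1 : pr P (ev X 1) ≠ 0) (h0 : pr P (ev X 0) ≠ 0) (Z : Ω → ℝ) :
    riskDiff P X Z =
      pr P (ev Y 1) * (cpr P (ev Z 1) (ev X 1 ∩ ev Y 1) - cpr P (ev Z 1) (ev X 0 ∩ ev Y 1)) +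
      pr P (ev Y 0) * (cpr P (ev Z 1) (ev X 1 ∩ ev Y 0) - cpr P (ev Z 1) (ev X 0 ∩ ev Y 0)) := by
  rw [riskDiff, cpr_ev_eq_of_indepFun hX hY hXY _ h1, cpr_ev_eq_of_indepFun hX hY hXY _ h0]
  ring

lemma exists_pos_strataW_mul_strataRD_add_eq [IsProbabilityMeasure P] (hX : IsBin X)
    (hY : IsBin Y) (hZ : IsBin Z) (hXY : IndepFun X Y P)
    (h11 : 0 < pr P (ev X 1 ∩ ev Z 1)) (h01 : 0 < pr P (ev X 0 ∩ ev Z 1))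
    (h10 : 0 < pr P (ev X 1 ∩ ev Z 0)) (h00 : 0 < pr P (ev X 0 ∩ ev Z 0))
    (hY1 : 0 < pr P (ev Y 1)) (hY0 : 0 < pr P (ev Y 0)) :
    ∃ K > 0, strataW P X Z 1 * strataRD P X Y Z 1 + strataW P X Z 0 * strataRD P X Y Z 0 =
      -(K * (riskDiff P X Z * riskDiff P Y Z)) := by
  have hZ1 : 0 < pr P (ev Z 1) := h11.trans_le (measureReal_mono Set.inter_subset_right)
  have hZ0 : 0 < pr P (ev Z 0) := h10.trans_le (measureReal_mono Set.inter_subset_right)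
  have hX1 : 0 < pr P (ev X 1) := h11.trans_le (measureReal_mono Set.inter_subset_left)
  have hX0 : 0 < pr P (ev X 0) := h01.trans_le (measureReal_mono Set.inter_subset_left)
  have hvar := add_pos (varCond_mul_pr_pos hX (hZ.measurableSet_ev 1) h11 h01)
    (varCond_mul_pr_pos hX (hZ.measurableSet_ev 0) h10 h00)
  refine ⟨rcov P X X * rcov P Y Y / (pr P (ev Z 1) * pr P (ev Z 0) *
    (varCond P X (ev Z 1) * pr P (ev Z 1) + varCond P X (ev Z 0) * pr P (ev Z 0))), ?_, ?_⟩
  · rw [rcov_self_of_isBin hX, rcov_self_of_isBin hY]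
    positivity
  · rw [strataW_mul_strataRD_add_of_indepFun hX hY hZ hXY hZ1.ne' hZ0.ne',
      ← rcov_self_mul_riskDiff hX hZ, ← rcov_self_mul_riskDiff hY hZ]
    ring

end

/-- The sign of V-bias due to linear regression adjustment for `C`: (i) negative when the
effects of `X` and `Y` on `C` are in the same direction; (ii) positive when they are in
opposite directions. -/
theorem V_bias_lm_sign (P : Measure Ω) [IsProbabilityMeasure P]
    (X Y C : Ω → ℝ) (hX : IsBin X) (hY : IsBin Y) (hC : IsBin C)
    (hindep : IndepFun X Y P)
    (hX1 : 0 < pr P (ev X 1)) (hX1' : pr P (ev X 1) < 1)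
    (hY1 : 0 < pr P (ev Y 1)) (hY1' : pr P (ev Y 1) < 1)
    (hXC : ∀ x c : ℝ, (x = 0 ∨ x = 1) → (c = 0 ∨ c = 1) → 0 < pr P (ev X x ∩ ev C c)) :
    (((cpr P (ev C 1) (ev X 1 ∩ ev Y 1) > cpr P (ev C 1) (ev X 1 ∩ ev Y 0) ∧
        cpr P (ev C 1) (ev X 0 ∩ ev Y 1) > cpr P (ev C 1) (ev X 0 ∩ ev Y 0) ∧
        cpr P (ev C 1) (ev X 1 ∩ ev Y 1) > cpr P (ev C 1) (ev X 0 ∩ ev Y 1) ∧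
        cpr P (ev C 1) (ev X 1 ∩ ev Y 0) > cpr P (ev C 1) (ev X 0 ∩ ev Y 0)) ∨
      (cpr P (ev C 1) (ev X 1 ∩ ev Y 1) < cpr P (ev C 1) (ev X 1 ∩ ev Y 0) ∧
        cpr P (ev C 1) (ev X 0 ∩ ev Y 1) < cpr P (ev C 1) (ev X 0 ∩ ev Y 0) ∧
        cpr P (ev C 1) (ev X 1 ∩ ev Y 1) < cpr P (ev C 1) (ev X 0 ∩ ev Y 1) ∧
        cpr P (ev C 1) (ev X 1 ∩ ev Y 0) < cpr P (ev C 1) (ev X 0 ∩ ev Y 0))) →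
      strataW P X C 1 * strataRD P X Y C 1 + strataW P X C 0 * strataRD P X Y C 0 < 0) ∧
    (((cpr P (ev C 1) (ev X 1 ∩ ev Y 1) > cpr P (ev C 1) (ev X 0 ∩ ev Y 1) ∧
        cpr P (ev C 1) (ev X 1 ∩ ev Y 0) > cpr P (ev C 1) (ev X 0 ∩ ev Y 0) ∧
        cpr P (ev C 1) (ev X 1 ∩ ev Y 1) < cpr P (ev C 1) (ev X 1 ∩ ev Y 0) ∧
        cpr P (ev C 1) (ev X 0 ∩ ev Y 1) < cpr P (ev C 1) (ev X 0 ∩ ev Y 0)) ∨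
      (cpr P (ev C 1) (ev X 1 ∩ ev Y 1) < cpr P (ev C 1) (ev X 0 ∩ ev Y 1) ∧
        cpr P (ev C 1) (ev X 1 ∩ ev Y 0) < cpr P (ev C 1) (ev X 0 ∩ ev Y 0) ∧
        cpr P (ev C 1) (ev X 1 ∩ ev Y 1) > cpr P (ev C 1) (ev X 1 ∩ ev Y 0) ∧
        cpr P (ev C 1) (ev X 0 ∩ ev Y 1) > cpr P (ev C 1) (ev X 0 ∩ ev Y 0))) →
      strataW P X C 1 * strataRD P X Y C 1 + strataW P X C 0 * strataRD P X Y C 0 > 0) := by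
  have hX0 : 0 < pr P (ev X 0) := by rw [pr_ev_zero hX]; linarith
  have hY0 : 0 < pr P (ev Y 0) := by rw [pr_ev_zero hY]; linarith
  obtain ⟨K, hK, hbias⟩ := exists_pos_strataW_mul_strataRD_add_eq hX hY hC hindep
    (hXC 1 1 (.inr rfl) (.inr rfl)) (hXC 0 1 (.inl rfl) (.inr rfl))
    (hXC 1 0 (.inr rfl) (.inl rfl)) (hXC 0 0 (.inl rfl) (.inl rfl)) hY1 hY0
  have hΔX := riskDiff_eq_of_indepFun hX hY hindep hX1.ne' hX0.ne' C
  have hΔY := riskDiff_eq_of_indepFun hY hX hindep.symm hY1.ne' hY0.ne' C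
  simp only [Set.inter_comm (ev Y _) (ev X _)] at hΔY
  rw [hbias, hΔX, hΔY]
  refine ⟨fun h => neg_neg_of_pos (mul_pos hK ?_),
    fun h => neg_pos_of_neg (mul_neg_of_pos_of_neg hK ?_)⟩
  · rcases h with ⟨h1, h2, h3, h4⟩ | ⟨h1, h2, h3, h4⟩
    · exact mul_pos (by nlinarith) (by nlinarith)
    · exact mul_pos_of_neg_of_neg (by nlinarith) (by nlinarith)
  · rcases h with ⟨h1, h2, h3, h4⟩ | ⟨h1, h2, h3, h4⟩
    · exact mul_neg_of_pos_of_neg (by nlinarith) (by nlinarith)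
    · exact mul_neg_of_neg_of_pos (by nlinarith) (by nlinarith)
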